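/- The polynomial f(α) = α³ + (9/2)α²(1−α) + (9/4)α(1−α)² + (1/8)(1−α)³ attains its maximum on the interval [0,1] at α = (1 + 2√14)/11, and its value there is strictly greater than 1.163. -/
import Mathlib


/-- The volume ratio of the Minkowski interpolation of the unit regular tetrahedron
and its inverted copy. -/
noncomputable def f (α : ℝ) : ℝ :=
  α ^ 3 + 9 / 2 * α ^ 2 * (1 - α) + 9 / 4 * α * (1 - α) ^ 2 + 1 / 8 * (1 - α) ^ 3

theorem ratio_polynomial_max :
    (1 + 2 * Real.sqrt 14) / 11 ∈ Set.Icc (0 : ℝ) 1 ∧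
    IsMaxOn f (Set.Icc (0 : ℝ) 1) ((1 + 2 * Real.sqrt 14) / 11) ∧
    f ((1 + 2 * Real.sqrt 14) / 11) > 1.163 := by
  have hs0 : (0:ℝ) ≤ Real.sqrt 14 := Real.sqrt_nonneg 14
  have hs : Real.sqrt 14 ^ 2 = 14 := Real.sq_sqrt (by norm_num)
  set s := Real.sqrt 14 with hsdef
  have hs3 : (3:ℝ) ≤ s := by nlinarith
  have hs4 : s ≤ 4 := by nlinarith
  refine ⟨⟨by nlinarith, by nlinarith⟩, ?_, ?_⟩
  · intro x hx
    simp only [Set.mem_Icc] at hx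
    obtain ⟨hx0, hx1⟩ := hx
    simp only [Set.mem_setOf_eq, f]
    nlinarith [sq_nonneg (11*x - 1 - 2*s), hx0, hx1,
      mul_nonneg (sq_nonneg (11*x - 1 - 2*s)) (show (0:ℝ) ≤ 11*x - 1 + 4*s by nlinarith)]
  · simp only [f]
    nlinarith [sq_nonneg (s - 15/4), sq_nonneg (1 + 2*s)]
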